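/- Let f : ℝ → ℝ be continuous and 1-periodic (f(x+1) = f(x) for all x), and suppose f is non-constant. Then the set P = {(x, y) ∈ ℝ² : f(x) = f(y), 0 ≤ y - x ≤ 1/2} contains, for the induced equivalence on the circle ℝ/ℤ, both a pair with y - x = 1/2 (a pair of 'antipodal' points) and a pair with y = x; moreover there is a connected subset of {(x,y) ∈ (ℝ/ℤ)² : f(x) = f(y)} containing both such pairs. -/

import Mathlib

/-!
Put `h (x, t) = f (x + t) - f x`; a zero of `h` is a pair `(x, x + t)` of points of the circle with
equal values, the line `t = 0` giving the diagonal and `t = 1/2` the antipodal pairs. Let `f` attain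
its minimum at `a` and its maximum at `b`, and colour a fine hex grid on `[a, b] × [0, 1/2]` by
whether `h` changes sign at a cell. By the Hex theorem, either the sign-change cells join `t = 1/2`
to `t = 0`, which gives a chain of zeros of `h` with small steps from an antipodal pair to the
diagonal, or the remaining cells join the column `x = a` to the column `x = b`. The latter is
impossible: `h` keeps a strict sign along such a path, while `h ≥ 0` on `x = a` and `h ≤ 0` on
`x = b`. Finally, in the compact set of pairs with equal values, chains from the antipodal pairs to
the diagonal with arbitrarily small steps force a single connected component to meet both, since
a clopen separation would leave a gap that fine chains cannot cross.

The Hex theorem is deduced from the theorem of Y, which is proved by majority reduction.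
-/

open Set Relation Metric Function

lemma Relation.ReflTransGen.exists_level_prefix {α : Type*} {r : α → α → Prop} {φ : α → ℤ}
    (hr : ∀ a b, r a b → φ a ≤ φ b + 1) {u v : α} (h : ReflTransGen r u v) {m : ℤ}
    (hv : φ v ≤ m) (hu : m ≤ φ u) :
    ∃ w, φ w = m ∧ ReflTransGen (fun a b => r a b ∧ m ≤ φ a ∧ m ≤ φ b) u w := by
  induction h using ReflTransGen.head_induction_on with
  | refl => exact ⟨v, by omega, .refl⟩
  | @head a a' haa' _ ih =>
    rcases eq_or_lt_of_le hu with hau | hau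
    · exact ⟨a, hau.symm, .refl⟩
    · obtain ⟨w, hw, hchain⟩ := ih (by linarith [hr a a' haa'])
      exact ⟨w, hw, .head ⟨haa', hau.le, by linarith [hr a a' haa']⟩ hchain⟩

namespace Hex

def dirs : List (ℤ × ℤ) := [(1, 0), (-1, 0), (0, 1), (0, -1), (1, 1), (-1, -1)]

def closeDirs : List (ℤ × ℤ) := (0, 0) :: dirs

def Step (s : Set (ℤ × ℤ)) (a b : ℤ × ℤ) : Prop := a ∈ s ∧ b ∈ s ∧ b - a ∈ dirs

instance (s : Set (ℤ × ℤ)) : Std.Symm (Step s) where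
  symm a b h := ⟨h.2.1, h.1, by
    have neg_mem : ∀ d ∈ dirs, -d ∈ dirs := by decide
    simpa using neg_mem _ h.2.2⟩

lemma Step.mono {s t : Set (ℤ × ℤ)} (hst : s ⊆ t) {a b : ℤ × ℤ} (h : Step s a b) : Step t a b :=
  ⟨hst h.1, hst h.2.1, h.2.2⟩

lemma Step.snd_le {s : Set (ℤ × ℤ)} {a b : ℤ × ℤ} (h : Step s a b) : a.2 ≤ b.2 + 1 := by
  have bound : ∀ d ∈ dirs, -1 ≤ d.2 := by decide
  have := bound _ h.2.2
  simp only [Prod.snd_sub] at this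
  omega

lemma Step.fst_le {s : Set (ℤ × ℤ)} {a b : ℤ × ℤ} (h : Step s a b) : b.1 ≤ a.1 + 1 := by
  have bound : ∀ d ∈ dirs, d.1 ≤ 1 := by decide
  have := bound _ h.2.2
  simp only [Prod.fst_sub] at this
  omega

lemma reflTransGen_step_of_sub_mem_closeDirs {s : Set (ℤ × ℤ)} {a b : ℤ × ℤ} (ha : a ∈ s)
    (hb : b ∈ s) (h : b - a ∈ closeDirs) : ReflTransGen (Step s) a b := by
  rcases List.mem_cons.mp h with h | h
  · rw [sub_eq_zero.mp h]
  · exact .single ⟨ha, hb, h⟩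

def triangle (n : ℕ) : Set (ℤ × ℤ) := {v | 0 ≤ v.1 ∧ v.1 ≤ v.2 ∧ v.2 ≤ n}

def rectangle (W H : ℕ) : Set (ℤ × ℤ) := {v | 0 ≤ v.1 ∧ v.1 ≤ W ∧ 0 ≤ v.2 ∧ v.2 ≤ H}

def SpansTriangle (n : ℕ) (s : Set (ℤ × ℤ)) : Prop :=
  ∃ p ∈ s, ∃ q ∈ s, ∃ r ∈ s, p.1 = 0 ∧ q.1 = q.2 ∧ r.2 = n ∧
    ReflTransGen (Step s) p q ∧ ReflTransGen (Step s) p r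

def triOff : Fin 3 → ℤ × ℤ := ![(0, 0), (0, 1), (1, 1)]

def maj3 (x y z : Bool) : Bool := x && y || x && z || y && z

def majority (c : ℤ × ℤ → Bool) (v : ℤ × ℤ) : Bool :=
  maj3 (c (v + triOff 0)) (c (v + triOff 1)) (c (v + triOff 2))

lemma add_triOff_mem_triangle {n : ℕ} {u : ℤ × ℤ} (hu : u ∈ triangle n) (i : Fin 3) :
    u + triOff i ∈ triangle (n + 1) := by
  obtain ⟨h1, h2, h3⟩ := hu
  fin_cases i <;> simp [triangle, triOff] <;> omega

lemma triOff_sub_mem_closeDirs : ∀ i j, triOff j - triOff i ∈ closeDirs := by decide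

lemma majority_eq_or {c : ℤ × ℤ → Bool} {b : Bool} {u : ℤ × ℤ} (h : majority c u = b)
    {i j : Fin 3} (hij : i ≠ j) : c (u + triOff i) = b ∨ c (u + triOff j) = b := by
  have key : ∀ b (x : Fin 3 → Bool), maj3 (x 0) (x 1) (x 2) = b → ∀ i j, i ≠ j →
      x i = b ∨ x j = b := by
    decide
  exact key b (fun k => c (u + triOff k)) h i j hij

/-- Two cells that are equal or adjacent and have the same majority colour have triangles
containing cells of that colour which are equal or adjacent. -/
lemma exists_close_of_maj3 : ∀ d ∈ closeDirs, ∀ b : Bool, ∀ x y : Fin 3 → Bool,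
    maj3 (x 0) (x 1) (x 2) = b → maj3 (y 0) (y 1) (y 2) = b →
    ∃ i j, x i = b ∧ y j = b ∧ d + triOff j - triOff i ∈ closeDirs := by
  decide

section Majority

variable {c : ℤ × ℤ → Bool} {b : Bool} {n : ℕ}

lemma reflTransGen_add_triOff_of_sub_mem_closeDirs {u v : ℤ × ℤ}
    (hu : u ∈ triangle n ∩ {w | majority c w = b}) (hv : v ∈ triangle n ∩ {w | majority c w = b})
    (huv : v - u ∈ closeDirs) {i j : Fin 3} (hi : c (u + triOff i) = b)
    (hj : c (v + triOff j) = b) :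
    ReflTransGen (Step (triangle (n + 1) ∩ {w | c w = b})) (u + triOff i) (v + triOff j) := by
  obtain ⟨i', j', hi', hj', hclose⟩ := exists_close_of_maj3 _ huv b
    (fun k => c (u + triOff k)) (fun k => c (v + triOff k)) hu.2 hv.2
  have mem : ∀ {w}, w ∈ triangle n → ∀ k, c (w + triOff k) = b →
      w + triOff k ∈ triangle (n + 1) ∩ {w | c w = b} :=
    fun hw k hk => ⟨add_triOff_mem_triangle hw k, hk⟩
  have sub_eq : ∀ {w w'} k k', w' + triOff k' - (w + triOff k) = w' - w + triOff k' - triOff k :=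
    fun _ _ => by abel
  refine (reflTransGen_step_of_sub_mem_closeDirs (mem hu.1 i hi) (mem hu.1 i' hi') ?_).trans <|
    (reflTransGen_step_of_sub_mem_closeDirs (mem hu.1 i' hi') (mem hv.1 j' hj') ?_).trans <|
    reflTransGen_step_of_sub_mem_closeDirs (mem hv.1 j' hj') (mem hv.1 j hj) ?_
  · simpa [sub_eq] using triOff_sub_mem_closeDirs i i'
  · rwa [sub_eq]
  · simpa [sub_eq] using triOff_sub_mem_closeDirs j' j

lemma reflTransGen_add_triOff {u v : ℤ × ℤ}
    (h : ReflTransGen (Step (triangle n ∩ {w | majority c w = b})) u v)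
    (hu : u ∈ triangle n ∩ {w | majority c w = b}) {i j : Fin 3} (hi : c (u + triOff i) = b)
    (hj : c (v + triOff j) = b) :
    ReflTransGen (Step (triangle (n + 1) ∩ {w | c w = b})) (u + triOff i) (v + triOff j) := by
  induction h generalizing j with
  | refl =>
    exact reflTransGen_add_triOff_of_sub_mem_closeDirs hu hu
      (by rw [sub_self]; exact List.mem_cons_self) hi hj
  | @tail w v _ hwv ih =>
    obtain ⟨k, hk⟩ : ∃ k, c (w + triOff k) = b :=
      (majority_eq_or hwv.1.2 (i := 0) (j := 1) (by decide)).elim (⟨0, ·⟩) (⟨1, ·⟩)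
    exact (ih hk).trans <| reflTransGen_add_triOff_of_sub_mem_closeDirs hwv.1 hwv.2.1
      (List.mem_cons_of_mem _ hwv.2.2) hk hj

end Majority

theorem exists_spansTriangle (n : ℕ) (c : ℤ × ℤ → Bool) :
    ∃ b, SpansTriangle n (triangle n ∩ {v | c v = b}) := by
  induction n generalizing c with
  | zero =>
    have h0 : (0 : ℤ × ℤ) ∈ triangle 0 ∩ {v | c v = c 0} := ⟨by simp [triangle], rfl⟩
    exact ⟨c 0, 0, h0, 0, h0, 0, h0, rfl, rfl, by simp, .refl, .refl⟩
  | succ n ih =>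
    -- A spanning set for the majority colouring on the smaller board lifts cell by cell.
    obtain ⟨b, p, hp, q, hq, r, hr, hp1, hq12, hr2, hpq, hpr⟩ := ih (majority c)
    obtain ⟨i, hi1, hi⟩ : ∃ i, (triOff i).1 = 0 ∧ c (p + triOff i) = b :=
      (majority_eq_or hp.2 (i := 0) (j := 1) (by decide)).elim (⟨0, rfl, ·⟩) (⟨1, rfl, ·⟩)
    obtain ⟨j, hj12, hj⟩ : ∃ j, (triOff j).1 = (triOff j).2 ∧ c (q + triOff j) = b :=
      (majority_eq_or hq.2 (i := 0) (j := 2) (by decide)).elim (⟨0, rfl, ·⟩) (⟨2, rfl, ·⟩)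
    obtain ⟨k, hk2, hk⟩ : ∃ k, (triOff k).2 = 1 ∧ c (r + triOff k) = b :=
      (majority_eq_or hr.2 (i := 1) (j := 2) (by decide)).elim (⟨1, rfl, ·⟩) (⟨2, rfl, ·⟩)
    refine ⟨b, p + triOff i, ⟨add_triOff_mem_triangle hp.1 i, hi⟩,
      q + triOff j, ⟨add_triOff_mem_triangle hq.1 j, hj⟩,
      r + triOff k, ⟨add_triOff_mem_triangle hr.1 k, hk⟩, ?_, ?_, ?_,
      reflTransGen_add_triOff hpq hp hi hj, reflTransGen_add_triOff hpr hp hi hk⟩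
    · simp [hp1, hi1]
    · simp [hq12, hj12]
    · simp [hr2, hk2]

section Rectangle

variable {W H : ℕ} {c : ℤ × ℤ → Bool}

/-- Places `c` on the copy of `rectangle W H` inside `triangle (W + H)` with corner `(0, W)`; the
cells below it are `true` and those to its right `false`. -/
def padColoring (W : ℕ) (c : ℤ × ℤ → Bool) (v : ℤ × ℤ) : Bool :=
  if v.2 < W then true else if (W : ℤ) < v.1 then false else c (v - (0, (W : ℤ)))

lemma padColoring_true {v : ℤ × ℤ} (hv : padColoring W c v = true) (h2 : (W : ℤ) ≤ v.2) :
    v.1 ≤ W := by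
  by_contra h1
  simp [padColoring, not_lt.mpr h2, lt_of_not_ge h1] at hv

lemma padColoring_false {v : ℤ × ℤ} (hv : padColoring W c v = false) : (W : ℤ) ≤ v.2 := by
  by_contra h2
  simp [padColoring, lt_of_not_ge h2] at hv

lemma sub_mem_rectangle {b : Bool} {v : ℤ × ℤ}
    (hv : v ∈ triangle (W + H) ∩ {w | padColoring W c w = b}) (h2 : (W : ℤ) ≤ v.2)
    (h1 : v.1 ≤ W) : v - (0, (W : ℤ)) ∈ rectangle W H ∩ {w | c w = b} := by
  obtain ⟨⟨h0, -, hn⟩, hb⟩ := hv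
  refine ⟨⟨by simpa using h0, by simpa using h1, by simpa using h2, ?_⟩, ?_⟩
  · simp only [Prod.snd_sub]; push_cast at hn; omega
  simpa [padColoring, not_lt.mpr h2, not_lt.mpr h1] using hb

lemma step_sub_of_le {b : Bool} {x y : ℤ × ℤ}
    (h : Step (triangle (W + H) ∩ {w | padColoring W c w = b}) x y)
    (hx2 : (W : ℤ) ≤ x.2) (hy2 : (W : ℤ) ≤ y.2) (hx1 : x.1 ≤ W) (hy1 : y.1 ≤ W) :
    Step (rectangle W H ∩ {w | c w = b}) (x - (0, (W : ℤ))) (y - (0, (W : ℤ))) :=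
  ⟨sub_mem_rectangle h.1 hx2 hx1, sub_mem_rectangle h.2.1 hy2 hy1, by simpa using h.2.2⟩

theorem exists_crossing (W H : ℕ) (c : ℤ × ℤ → Bool) :
    (∃ u v, u.2 = (H : ℤ) ∧ v.2 = 0 ∧ u ∈ rectangle W H ∩ {w | c w = true} ∧
      ReflTransGen (Step (rectangle W H ∩ {w | c w = true})) u v) ∨
    (∃ u v, u.1 = 0 ∧ v.1 = (W : ℤ) ∧ u ∈ rectangle W H ∩ {w | c w = false} ∧
      ReflTransGen (Step (rectangle W H ∩ {w | c w = false})) u v) := by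
  obtain ⟨b, p, hp, q, hq, r, hr, hp1, hq12, hr2, hpq, hpr⟩ :=
    exists_spansTriangle (W + H) (padColoring W c)
  cases b with
  | true =>
    -- Follow the chain from the top side `r` to the diagonal side `q` down to row `W`.
    have hq2 : q.2 ≤ W := by
      by_contra h
      have := padColoring_true hq.2 (by omega)
      omega
    obtain ⟨w, hw, hrw⟩ := ((Std.Symm.symm _ _ hpr).trans hpq).exists_level_prefix
      (φ := fun v => v.2) (fun _ _ => Step.snd_le) hq2 (by simp [hr2])
    refine Or.inl ⟨r - (0, (W : ℤ)), w - (0, (W : ℤ)), by simp [hr2], by simp [hw], ?_, ?_⟩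
    · exact sub_mem_rectangle hr (by simp [hr2]) (padColoring_true hr.2 (by simp [hr2]))
    · refine ReflTransGen.lift (p := Step _) (· - (0, (W : ℤ))) (fun x y hxy => ?_) _ _ hrw
      exact step_sub_of_le hxy.1 hxy.2.1 hxy.2.2 (padColoring_true hxy.1.1.2 hxy.2.1)
        (padColoring_true hxy.1.2.1.2 hxy.2.2)
  | false =>
    -- Follow the chain from the left side `p` to the diagonal side `q` right to column `W`.
    obtain ⟨w, hw, hpw⟩ := hpq.exists_level_prefix (φ := fun v => -v.1)
      (fun _ _ h => by linarith [Step.fst_le h]) (m := -W)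
      (by linarith [padColoring_false hq.2]) (by simp [hp1])
    refine Or.inr ⟨p - (0, (W : ℤ)), w - (0, (W : ℤ)), by simp [hp1], by simp; omega, ?_, ?_⟩
    · exact sub_mem_rectangle hp (padColoring_false hp.2) (by simp [hp1])
    · refine ReflTransGen.lift (p := Step _) (· - (0, (W : ℤ))) (fun x y hxy => ?_) _ _ hpw
      exact step_sub_of_le hxy.1 (padColoring_false hxy.1.1.2) (padColoring_false hxy.1.2.1.2)
        (by linarith [hxy.2.1]) (by linarith [hxy.2.2])

end Rectangle

end Hex

lemma exists_isClopen_of_disjoint_connectedComponent {X : Type*} [TopologicalSpace X]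
    [CompactSpace X] [T2Space X] {A B : Set X} (hA : IsClosed A) (hB : IsClosed B)
    (h : ∀ x ∈ A, Disjoint (connectedComponent x) B) :
    ∃ K, IsClopen K ∧ A ⊆ K ∧ Disjoint K B := by
  have hπ := ConnectedComponents.continuous_coe (α := X)
  obtain ⟨C, hC, hAC, hCB⟩ := exists_clopen_of_closed_subset_open
    (hA.isCompact.image hπ).isClosed (hB.isCompact.image hπ).isClosed.isOpen_compl (by
      rintro _ ⟨a, ha, rfl⟩ ⟨b, hb, hab⟩
      exact disjoint_left.mp (h a ha) (ConnectedComponents.coe_eq_coe'.mp hab) hb)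
  exact ⟨_, hC.preimage hπ, fun x hx => hAC ⟨x, hx, rfl⟩,
    disjoint_left.mpr fun x hxC hxB => hCB hxC ⟨x, hxB, rfl⟩⟩

section Chains

variable {X : Type*} [MetricSpace X]

lemma mem_of_reflTransGen_dist_lt {E K L : Set X} {δ : ℝ} (hE : E ⊆ K ∪ L)
    (hKL : Disjoint (thickening δ K) (thickening δ L)) {a b : X}
    (h : ReflTransGen (fun p q => q ∈ E ∧ dist p q < δ) a b) (ha : a ∈ K) : b ∈ K := by
  induction h with
  | refl => exact ha
  | tail _ hpq ih =>
    refine (hE hpq.1).resolve_right fun hqL => disjoint_left.mp hKL ?_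
      (self_subset_thickening (dist_nonneg.trans_lt hpq.2) _ hqL)
    exact mem_thickening_iff.mpr ⟨_, ih, by rw [dist_comm]; exact hpq.2⟩

theorem exists_isConnected_of_forall_chain {E A B : Set X}
    (hE : IsCompact E) (hA : IsClosed A) (hB : IsClosed B)
    (hchain : ∀ δ > 0, ∃ a ∈ E ∩ thickening δ A, ∃ b ∈ thickening δ B,
      ReflTransGen (fun p q => q ∈ E ∧ dist p q < δ) a b) :
    ∃ S ⊆ E, IsConnected S ∧ (S ∩ A).Nonempty ∧ (S ∩ B).Nonempty := by
  by_contra! hS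
  have : CompactSpace E := isCompact_iff_compactSpace.mp hE
  have hcomp : ∀ x : E, (x : X) ∈ A → Disjoint (connectedComponent x) (Subtype.val ⁻¹' B) := by
    refine fun x hx => disjoint_left.mpr fun y hy hyB => ?_
    have hS' := hS _ (image_subset_iff.mpr fun z _ => z.2)
      (isConnected_connectedComponent.image _ continuous_subtype_val.continuousOn)
      ⟨x, ⟨x, mem_connectedComponent, rfl⟩, hx⟩
    exact eq_empty_iff_forall_notMem.mp hS' y ⟨⟨y, hy, rfl⟩, hyB⟩
  obtain ⟨K, hK, hAK, hKB⟩ := exists_isClopen_of_disjoint_connectedComponent (X := E)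
    (hA.preimage continuous_subtype_val) (hB.preimage continuous_subtype_val) hcomp
  set K' : Set X := Subtype.val '' K
  set L' : Set X := Subtype.val '' Kᶜ
  have hK' : IsCompact K' := hK.isClosed.isCompact.image continuous_subtype_val
  have hL' : IsCompact L' := hK.compl.isClosed.isCompact.image continuous_subtype_val
  have hEKL : E ⊆ K' ∪ L' := fun x hx => (em (⟨x, hx⟩ ∈ K)).imp (⟨_, ·, rfl⟩) (⟨_, ·, rfl⟩)
  have hKL : Disjoint K' L' := (disjoint_image_iff Subtype.val_injective).mpr disjoint_compl_right
  have hLA : Disjoint L' A := by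
    rw [disjoint_image_left]
    exact disjoint_left.mpr fun x hx hxA => hx (hAK hxA)
  have hKB' : Disjoint K' B := by
    rw [disjoint_image_left]
    exact hKB
  obtain ⟨δ₁, hδ₁, h₁⟩ := hKL.exists_thickenings hK' hL'.isClosed
  obtain ⟨δ₂, hδ₂, h₂⟩ := hLA.exists_thickenings hL' hA
  obtain ⟨δ₃, hδ₃, h₃⟩ := hKB'.exists_thickenings hK' hB
  set δ := min δ₁ (min δ₂ δ₃)
  obtain ⟨a, ⟨haE, haA⟩, b, hbB, hab⟩ := hchain δ (by positivity)
  have haK : a ∈ K' := (hEKL haE).resolve_right fun haL => disjoint_left.mp h₂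
    (self_subset_thickening hδ₂ _ haL) (thickening_mono (by simp [δ]) _ haA)
  have hbK := mem_of_reflTransGen_dist_lt hEKL
    (h₁.mono (thickening_mono (by simp [δ]) _) (thickening_mono (by simp [δ]) _)) hab haK
  exact disjoint_left.mp h₃ (self_subset_thickening hδ₃ _ hbK)
    (thickening_mono (by simp [δ]) _ hbB)

end Chains

def SignChangeAt (G : ℤ × ℤ → ℝ) (v : ℤ × ℤ) : Prop := ∃ d ∈ Hex.closeDirs, G v * G (v + d) ≤ 0

section SignChange

variable {G : ℤ × ℤ → ℝ}

lemma ne_zero_of_not_signChangeAt {v : ℤ × ℤ} (hv : ¬ SignChangeAt G v) : G v ≠ 0 :=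
  fun h => hv ⟨0, List.mem_cons_self, by simp [h]⟩

lemma pos_of_reflTransGen_not_signChangeAt {u v : ℤ × ℤ}
    (h : ReflTransGen (Hex.Step {w | ¬ SignChangeAt G w}) u v) (hu : 0 < G u) : 0 < G v := by
  induction h with
  | refl => exact hu
  | @tail a b _ hab ih =>
    have hmul : 0 < G a * G (a + (b - a)) := by
      by_contra hle
      exact hab.1 ⟨b - a, List.mem_cons_of_mem _ hab.2.2, not_lt.mp hle⟩
    rw [add_sub_cancel] at hmul
    exact pos_of_mul_pos_right hmul ih.le

variable {E : Type*} [NormedAddCommGroup E] [NormedSpace ℝ E] {g : E → ℝ} {P : ℤ × ℤ → E} {r : ℝ}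

lemma exists_zero_near_of_signChangeAt (hg : Continuous g)
    (hP : ∀ v, ∀ d ∈ Hex.closeDirs, dist (P v) (P (v + d)) ≤ r) {v : ℤ × ℤ}
    (hv : SignChangeAt (g ∘ P) v) : ∃ z, g z = 0 ∧ dist z (P v) ≤ r := by
  obtain ⟨d, hd, hmul⟩ := hv
  have hseg := (convex_segment (P v) (P (v + d))).isPreconnected
  have hgc := hg.continuousOn (s := segment ℝ (P v) (P (v + d)))
  obtain ⟨z, hz, hgz⟩ : ∃ z ∈ segment ℝ (P v) (P (v + d)), g z = 0 := by
    rcases mul_nonpos_iff.mp hmul with ⟨h0, h1⟩ | ⟨h0, h1⟩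
    · obtain ⟨z, hz, hgz⟩ := hseg.intermediate_value₂ (left_mem_segment ℝ _ _)
        (right_mem_segment ℝ _ _) continuousOn_const hgc h0 h1
      exact ⟨z, hz, hgz.symm⟩
    · exact hseg.intermediate_value₂ (left_mem_segment ℝ _ _) (right_mem_segment ℝ _ _) hgc
        continuousOn_const h0 h1
  exact ⟨z, hgz, (mem_closedBall.mp (segment_subset_closedBall_left _ _ hz)).trans (hP v d hd)⟩

lemma exists_zero_chain_of_reflTransGen (hg : Continuous g)
    (hP : ∀ v, ∀ d ∈ Hex.closeDirs, dist (P v) (P (v + d)) ≤ r) {u v : ℤ × ℤ}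
    (h : ReflTransGen (Hex.Step {w | SignChangeAt (g ∘ P) w}) u v)
    (hu : SignChangeAt (g ∘ P) u) :
    ∃ z w, g z = 0 ∧ dist z (P u) ≤ r ∧ dist w (P v) ≤ r ∧
      ReflTransGen (fun p q => g q = 0 ∧ dist p q ≤ 3 * r) z w := by
  choose! zero hzero using fun w (hw : SignChangeAt (g ∘ P) w) =>
    exists_zero_near_of_signChangeAt hg hP hw
  have hv : SignChangeAt (g ∘ P) v := by
    rcases h.cases_tail with rfl | ⟨_, _, hstep⟩
    exacts [hu, hstep.2.1]
  refine ⟨zero u, zero v, (hzero u hu).1, (hzero u hu).2, (hzero v hv).2,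
    ReflTransGen.lift zero (fun a b hab => ⟨(hzero b hab.2.1).1, ?_⟩) _ _ h⟩
  have hPab : dist (P a) (P b) ≤ r := by
    simpa using hP a (b - a) (List.mem_cons_of_mem _ hab.2.2)
  calc dist (zero a) (zero b) ≤ dist (zero a) (P a) + dist (P a) (P b) + dist (P b) (zero b) :=
        dist_triangle4 ..
    _ ≤ r + r + r := by
      gcongr
      exacts [(hzero a hab.1).2, dist_comm (P b) _ ▸ (hzero b hab.2.1).2]
    _ = 3 * r := by ring

end SignChange

def gridPoint (a α β : ℝ) (v : ℤ × ℤ) : ℝ × ℝ := (a + v.1 * α, v.2 * β)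

lemma dist_gridPoint_le {a α β r : ℝ} (hα : |α| ≤ r) (hβ : |β| ≤ r) (v : ℤ × ℤ) {d : ℤ × ℤ}
    (hd : d ∈ Hex.closeDirs) : dist (gridPoint a α β v) (gridPoint a α β (v + d)) ≤ r := by
  have bound : ∀ d ∈ Hex.closeDirs, |d.1| ≤ 1 ∧ |d.2| ≤ 1 := by decide
  have h1 : |(d.1 : ℝ)| ≤ 1 := by exact_mod_cast (bound d hd).1
  have h2 : |(d.2 : ℝ)| ≤ 1 := by exact_mod_cast (bound d hd).2
  rw [Prod.dist_eq, Real.dist_eq, Real.dist_eq]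
  refine max_le ?_ ?_
  · calc |a + v.1 * α - (a + (v + d).1 * α)| = |(d.1 : ℝ)| * |α| := by
          rw [← abs_mul, ← abs_neg]; simp only [Prod.fst_add]; push_cast; ring_nf
      _ ≤ 1 * r := by gcongr
      _ = r := one_mul r
  · calc |v.2 * β - (v + d).2 * β| = |(d.2 : ℝ)| * |β| := by
          rw [← abs_mul, ← abs_neg]; simp only [Prod.snd_add]; push_cast; ring_nf
      _ ≤ 1 * r := by gcongr
      _ = r := one_mul r

def shiftDiff (f : ℝ → ℝ) (p : ℝ × ℝ) : ℝ := f (p.1 + p.2) - f p.1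

theorem exists_shiftDiff_zero_chain {f : ℝ → ℝ} (hf : Continuous f) {a b : ℝ}
    (hab : |b - a| ≤ 1) (ha : ∀ x, f a ≤ f x) (hb : ∀ x, f x ≤ f b) {n : ℕ} (hn : 0 < n) :
    ∃ z w : ℝ × ℝ, ∃ x y : ℝ, shiftDiff f z = 0 ∧ dist z (x, 1 / 2) ≤ 1 / n ∧
      dist w (y, 0) ≤ 1 / n ∧
      ReflTransGen (fun p q => shiftDiff f q = 0 ∧ dist p q ≤ 3 * (1 / n)) z w := by
  have hn0 : (0 : ℝ) < n := by exact_mod_cast hn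
  set P := gridPoint a ((b - a) / n) (1 / (2 * n))
  have hP : ∀ v, ∀ d ∈ Hex.closeDirs, dist (P v) (P (v + d)) ≤ 1 / n := by
    refine fun v d hd => dist_gridPoint_le ?_ ?_ v hd
    · rw [abs_div, abs_of_pos hn0]; gcongr
    · rw [abs_of_pos (by positivity)]; gcongr; linarith
  have hg : Continuous (shiftDiff f) := by unfold shiftDiff; fun_prop
  classical
  rcases Hex.exists_crossing n n (fun v => decide (SignChangeAt (shiftDiff f ∘ P) v)) with
    ⟨u, v, hu2, hv2, hu, huv⟩ | ⟨u, v, hu1, hv1, hu, huv⟩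
  · obtain ⟨z, w, hz, hzu, hwv, hzw⟩ := exists_zero_chain_of_reflTransGen hg hP
      (ReflTransGen.mono (fun _ _ => Hex.Step.mono fun x hx => of_decide_eq_true hx.2) _ _ huv)
      (of_decide_eq_true hu.2)
    have hPu : P u = ((P u).1, 1 / 2) :=
      Prod.ext rfl (by simp only [P, gridPoint, hu2, Int.cast_natCast]; field_simp)
    have hPv : P v = ((P v).1, 0) := Prod.ext rfl (by simp [P, gridPoint, hv2])
    exact ⟨z, w, (P u).1, (P v).1, hz, hPu ▸ hzu, hPv ▸ hwv, hzw⟩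
  · -- Along the white path `shiftDiff f ∘ P` keeps a strict sign, but it is `≥ 0` on the column
    -- of the minimum of `f` and `≤ 0` on the column of its maximum.
    have hPu : (P u).1 = a := by simp [P, gridPoint, hu1]
    have hPv : (P v).1 = b := by
      simp only [P, gridPoint, hv1, Int.cast_natCast]; field_simp; ring
    have hu0 : 0 < (shiftDiff f ∘ P) u := lt_of_le_of_ne
      (by simp only [comp_apply, shiftDiff, hPu]; linarith [ha (a + (P u).2)])
      (ne_zero_of_not_signChangeAt (of_decide_eq_false hu.2)).symm
    have hv0 := pos_of_reflTransGen_not_signChangeAt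
      (ReflTransGen.mono (fun _ _ => Hex.Step.mono fun x hx => of_decide_eq_false hx.2) _ _ huv)
      hu0
    simp only [comp_apply, shiftDiff, hPv] at hv0
    linarith [hb (b + (P v).2)]

lemma Function.Periodic.exists_min_max_of_continuous {f : ℝ → ℝ} (hper : Periodic f 1)
    (hf : Continuous f) : ∃ a b, |b - a| ≤ 1 ∧ (∀ x, f a ≤ f x) ∧ ∀ x, f x ≤ f b := by
  have hK := hper.compact_of_continuous one_ne_zero hf
  obtain ⟨_, ⟨a, rfl⟩, ha⟩ := hK.exists_isLeast (range_nonempty f)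
  obtain ⟨_, ⟨b₀, rfl⟩, hb₀⟩ := hK.exists_isGreatest (range_nonempty f)
  obtain ⟨b, hb, hfb⟩ := hper.exists_mem_Ico one_pos b₀ a
  exact ⟨a, b, abs_le.mpr ⟨by linarith [hb.1], by linarith [hb.2]⟩,
    fun x => ha ⟨x, rfl⟩, fun x => hfb ▸ hb₀ ⟨x, rfl⟩⟩

def toTorus (p : ℝ × ℝ) : AddCircle (1 : ℝ) × AddCircle (1 : ℝ) := (p.1, (p.1 + p.2 : ℝ))

lemma dist_toTorus_le (p q : ℝ × ℝ) : dist (toTorus p) (toTorus q) ≤ 2 * dist p q := by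
  have hcoe : ∀ x y : ℝ, dist (x : AddCircle (1 : ℝ)) y ≤ |x - y| := fun x y => by
    rw [dist_eq_norm, ← AddCircle.coe_sub]
    exact QuotientAddGroup.norm_mk_le_norm
  rw [Prod.dist_eq, Prod.dist_eq, Real.dist_eq, Real.dist_eq]
  have h1 := le_max_left |p.1 - q.1| |p.2 - q.2|
  have h2 := le_max_right |p.1 - q.1| |p.2 - q.2|
  refine max_le ((hcoe _ _).trans (by linarith [abs_nonneg (p.1 - q.1)])) ((hcoe _ _).trans ?_)
  calc |p.1 + p.2 - (q.1 + q.2)| ≤ |p.1 - q.1| + |p.2 - q.2| := by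
        rw [show p.1 + p.2 - (q.1 + q.2) = (p.1 - q.1) + (p.2 - q.2) by ring]
        exact abs_add_le _ _
    _ ≤ 2 * max |p.1 - q.1| |p.2 - q.2| := by linarith

theorem exists_isConnected_antipodal_diagonal {f : ℝ → ℝ} (hf : Continuous f)
    (hper : Periodic f 1) :
    ∃ S ⊆ {p : AddCircle (1 : ℝ) × AddCircle (1 : ℝ) | hper.lift p.1 = hper.lift p.2},
      IsConnected S ∧ (S ∩ range fun x => (x, x + ((1 / 2 : ℝ) : AddCircle (1 : ℝ)))).Nonempty ∧
      (S ∩ range fun x => (x, x)).Nonempty := by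
  have hlift : Continuous hper.lift := continuous_coinduced_dom.mpr hf
  refine exists_isConnected_of_forall_chain
    (isClosed_eq (hlift.comp continuous_fst) (hlift.comp continuous_snd)).isCompact
    (isCompact_range (by fun_prop)).isClosed (isCompact_range (by fun_prop)).isClosed ?_
  intro δ hδ
  obtain ⟨a, b, hab, ha, hb⟩ := hper.exists_min_max_of_continuous hf
  obtain ⟨n, hn⟩ := exists_nat_gt (6 / δ)
  have hn0 : (0 : ℝ) < n := (by positivity : (0 : ℝ) < 6 / δ).trans hn
  obtain ⟨z, w, x, y, hz, hzx, hwy, hzw⟩ :=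
    exists_shiftDiff_zero_chain hf hab ha hb (n := n) (by exact_mod_cast hn0)
  have hmem : ∀ p, shiftDiff f p = 0 → hper.lift (toTorus p).1 = hper.lift (toTorus p).2 :=
    fun p hp => by simpa only [toTorus, hper.lift_coe] using (sub_eq_zero.mp hp).symm
  have hclose : ∀ p q, dist p q ≤ 3 * (1 / n) → dist (toTorus p) (toTorus q) < δ := by
    intro p q hpq
    have : 6 / (n : ℝ) < δ := by rwa [div_lt_iff₀ hn0, mul_comm, ← div_lt_iff₀ hδ]
    linarith [dist_toTorus_le p q, show 6 / (n : ℝ) = 2 * (3 * (1 / n)) by ring]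
  have hclose' : ∀ p q, dist p q ≤ 1 / n → dist (toTorus p) (toTorus q) < δ :=
    fun p q hpq => hclose p q (by linarith [show (0 : ℝ) ≤ 1 / n by positivity])
  refine ⟨toTorus z, ⟨hmem z hz, mem_thickening_iff.mpr ⟨_, ⟨x, ?_⟩, hclose' _ _ hzx⟩⟩,
    toTorus w, mem_thickening_iff.mpr ⟨_, ⟨y, ?_⟩, hclose' _ _ hwy⟩,
    ReflTransGen.lift toTorus (fun p q hpq => ⟨hmem q hpq.1, hclose p q hpq.2⟩) _ _ hzw⟩
  · simp [toTorus]
  · simp [toTorus]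

theorem stmt_18_general (f : ℝ → ℝ) (hf : Continuous f)
    (hper : Function.Periodic f 1) :
    (∃ x : ℝ, f (x + 1 / 2) = f x) ∧
    ∃ S : Set (AddCircle (1 : ℝ) × AddCircle (1 : ℝ)),
      IsConnected S ∧
      (∀ p ∈ S, hper.lift p.1 = hper.lift p.2) ∧
      (∃ x : AddCircle (1 : ℝ), (x, x + ((1 / 2 : ℝ) : AddCircle (1 : ℝ))) ∈ S) ∧
      (∃ y : AddCircle (1 : ℝ), (y, y) ∈ S) := by
  obtain ⟨S, hSE, hS, ⟨_, hxS, x, rfl⟩, ⟨_, hyS, y, rfl⟩⟩ :=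
    exists_isConnected_antipodal_diagonal hf hper
  obtain ⟨r, rfl⟩ := QuotientAddGroup.mk_surjective x
  have hr : hper.lift r = hper.lift (r + 1 / 2 : ℝ) := hSE hxS
  rw [hper.lift_coe, hper.lift_coe] at hr
  exact ⟨⟨r, hr.symm⟩, S, hS, hSE, ⟨_, hxS⟩, ⟨y, hyS⟩⟩

theorem stmt_18 (f : ℝ → ℝ) (hf : Continuous f)
    (hper : Function.Periodic f 1) (hnc : ¬ ∃ c : ℝ, ∀ x, f x = c) :
    (∃ x : ℝ, f (x + 1 / 2) = f x) ∧
    ∃ S : Set (AddCircle (1 : ℝ) × AddCircle (1 : ℝ)),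
      IsConnected S ∧
      (∀ p ∈ S, hper.lift p.1 = hper.lift p.2) ∧
      (∃ x : AddCircle (1 : ℝ), (x, x + ((1 / 2 : ℝ) : AddCircle (1 : ℝ))) ∈ S) ∧
      (∃ y : AddCircle (1 : ℝ), (y, y) ∈ S) :=
  stmt_18_general f hf hper
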